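/- Let Y be a closed subspace of a real Banach space X, and let ‖·‖ be a norm on Y equivalent to the norm it inherits from X. Then ‖·‖ can be extended to a norm |||·||| on X equivalent to the original norm of X, such that |||y||| = ‖y‖ for all y ∈ Y and every NSE point of the unit sphere S_{(Y,‖·‖)} is an NSE point of the unit sphere S_{(X,|||·|||)}. -/
import Mathlib


open Filter Topology NormedSpace

/-- `N` is a norm on `Z` equivalent to the original norm of `Z`. -/
structure IsEquivNorm {Z : Type*} [NormedAddCommGroup Z] [NormedSpace ℝ Z]
    (N : Z → ℝ) : Prop where
  add_le : ∀ x y : Z, N (x + y) ≤ N x + N y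
  smul_eq : ∀ (a : ℝ) (x : Z), N (a • x) = |a| * N x
  lower : ∃ c > (0 : ℝ), ∀ x : Z, c * ‖x‖ ≤ N x
  upper : ∃ C > (0 : ℝ), ∀ x : Z, N x ≤ C * ‖x‖

/-- `f` belongs to the unit sphere of the dual of `(Z, N)`, i.e. its dual norm with respect
to `N` equals `1`. -/
def DualSphere {Z : Type*} [NormedAddCommGroup Z] [NormedSpace ℝ Z]
    (N : Z → ℝ) (f : Z →L[ℝ] ℝ) : Prop :=
  (∀ x : Z, |f x| ≤ N x) ∧ ∀ c : ℝ, (∀ x : Z, |f x| ≤ c * N x) → 1 ≤ c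

/-- In the norm `N`, the point `x` is strongly exposed by the functional `f`: every sequence
in the closed `N`-unit ball on which `f` tends to `1` converges to `x`. -/
def StronglyExposedBy {Z : Type*} [NormedAddCommGroup Z] [NormedSpace ℝ Z]
    (N : Z → ℝ) (x : Z) (f : Z →L[ℝ] ℝ) : Prop :=
  ∀ xs : ℕ → Z, (∀ n, N (xs n) ≤ 1) →
    Tendsto (fun n => f (xs n)) atTop (𝓝 1) → Tendsto xs atTop (𝓝 x)

/-- `x` is a nicely strongly exposed (NSE) point of the unit sphere of `(Z, N)`. -/
def NSEPoint {Z : Type*} [NormedAddCommGroup Z] [NormedSpace ℝ Z]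
    (N : Z → ℝ) (x : Z) : Prop :=
  ∀ f : Z →L[ℝ] ℝ, DualSphere N f → f x = 1 → StronglyExposedBy N x f

/-- `x` is an almost locally uniformly rotund (aLUR) point of the unit sphere of `(Z, N)`. -/
def ALURPoint {Z : Type*} [NormedAddCommGroup Z] [NormedSpace ℝ Z]
    (N : Z → ℝ) (x : Z) : Prop :=
  ∀ (xs : ℕ → Z) (fs : ℕ → Z →L[ℝ] ℝ) (α : ℕ → ℝ),
    (∀ n, N (xs n) = 1) → (∀ m, DualSphere N (fs m)) →
    (∀ m, Tendsto (fun n => fs m ((2 : ℝ)⁻¹ • (xs n + x))) atTop (𝓝 (α m))) →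
    Tendsto α atTop (𝓝 1) →
    Tendsto xs atTop (𝓝 x)



section IC
variable {X : Type*} [NormedAddCommGroup X] [NormedSpace ℝ X]
variable (Y : Subspace ℝ X) (N : Y → ℝ) (K : ℝ)

noncomputable def ICn (x : X) : ℝ := ⨅ z : Y, (N z + K * ‖x - (z : X)‖)

variable {Y N K}

lemma IC_bdd (hnn : ∀ z : Y, 0 ≤ N z) (hK : 0 ≤ K) (x : X) :
    BddBelow (Set.range fun z : Y => N z + K * ‖x - (z : X)‖) := by
  refine ⟨0, ?_⟩
  rintro r ⟨z, rfl⟩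
  show 0 ≤ N z + K * ‖x - (z : X)‖
  have h1 := hnn z
  have h2 : 0 ≤ K * ‖x - (z : X)‖ := mul_nonneg hK (norm_nonneg _)
  linarith

lemma IC_le (hnn : ∀ z : Y, 0 ≤ N z) (hK : 0 ≤ K) (x : X) (z : Y) :
    ICn Y N K x ≤ N z + K * ‖x - (z : X)‖ :=
  ciInf_le (IC_bdd hnn hK x) z

lemma IC_nonneg (hnn : ∀ z : Y, 0 ≤ N z) (hK : 0 ≤ K) (x : X) : 0 ≤ ICn Y N K x := by
  haveI : Nonempty Y := ⟨0⟩
  refine le_ciInf fun z => ?_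
  have h1 := hnn z
  have h2 : 0 ≤ K * ‖x - (z : X)‖ := mul_nonneg hK (norm_nonneg _)
  linarith

lemma IC_le_norm (hs : ∀ (a : ℝ) (z : Y), N (a • z) = |a| * N z) (hnn : ∀ z : Y, 0 ≤ N z)
    (hK : 0 ≤ K) (x : X) : ICn Y N K x ≤ K * ‖x‖ := by
  have hN0 : N 0 = 0 := by
    have := hs 0 0
    simpa using this
  have := IC_le hnn hK x 0
  simpa [hN0] using this

lemma IC_add (hadd : ∀ z w : Y, N (z + w) ≤ N z + N w)
    (hnn : ∀ z : Y, 0 ≤ N z) (hK : 0 ≤ K) (x x' : X) :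
    ICn Y N K (x + x') ≤ ICn Y N K x + ICn Y N K x' := by
  haveI : Nonempty Y := ⟨0⟩
  have key : ∀ z z' : Y, ICn Y N K (x + x') ≤
      (N z + K * ‖x - (z : X)‖) + (N z' + K * ‖x' - (z' : X)‖) := by
    intro z z'
    have h1 := IC_le hnn hK (x + x') (z + z')
    have h2 : ‖x + x' - ((z : X) + (z' : X))‖ ≤ ‖x - (z : X)‖ + ‖x' - (z' : X)‖ := by
      have := norm_add_le (x - (z : X)) (x' - (z' : X))
      have e : x - (z : X) + (x' - (z' : X)) = x + x' - ((z : X) + (z' : X)) := by abel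
      rwa [e] at this
    have h3 := hadd z z'
    have h4 : K * ‖x + x' - ((z : X) + (z' : X))‖ ≤ K * (‖x - (z : X)‖ + ‖x' - (z' : X)‖) :=
      mul_le_mul_of_nonneg_left h2 hK
    have h5 : ((z + z' : Y) : X) = (z : X) + (z' : X) := rfl
    rw [h5] at h1
    nlinarith
  have step : ∀ z : Y, ICn Y N K (x + x') - (N z + K * ‖x - (z : X)‖) ≤ ICn Y N K x' := by
    intro z
    refine le_ciInf fun z' => ?_
    have := key z z'
    linarith
  have step2 : ICn Y N K (x + x') - ICn Y N K x' ≤ ICn Y N K x := by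
    refine le_ciInf fun z => ?_
    have := step z
    linarith
  linarith

lemma IC_smul_le (hs : ∀ (a : ℝ) (z : Y), N (a • z) = |a| * N z) (hnn : ∀ z : Y, 0 ≤ N z)
    (hK : 0 ≤ K) (a : ℝ) (x : X) : ICn Y N K (a • x) ≤ |a| * ICn Y N K x := by
  haveI : Nonempty Y := ⟨0⟩
  rcases eq_or_ne a 0 with rfl | ha
  · have hN0 : N 0 = 0 := by simpa using hs 0 0
    have h := IC_le hnn hK ((0:ℝ) • x) 0
    simp only [zero_smul] at h ⊢
    simp only [abs_zero, zero_mul]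
    simpa [hN0] using h
  · have hapos : 0 < |a| := abs_pos.mpr ha
    have h : ∀ z : Y, ICn Y N K (a • x) / |a| ≤ N z + K * ‖x - (z : X)‖ := by
      intro z
      rw [div_le_iff₀ hapos]
      have h1 := IC_le hnn hK (a • x) (a • z)
      have h2 : ((a • z : Y) : X) = a • (z : X) := rfl
      have h3 : ‖a • x - a • (z : X)‖ = |a| * ‖x - (z : X)‖ := by
        rw [← smul_sub, norm_smul, Real.norm_eq_abs]
      rw [h2, h3, hs a z] at h1
      nlinarith
    have h4 := le_ciInf h
    rw [div_le_iff₀ hapos] at h4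
    calc ICn Y N K (a • x) ≤ ICn Y N K x * |a| := h4
      _ = |a| * ICn Y N K x := mul_comm _ _

lemma IC_smul (hs : ∀ (a : ℝ) (z : Y), N (a • z) = |a| * N z) (hnn : ∀ z : Y, 0 ≤ N z)
    (hK : 0 ≤ K) (a : ℝ) (x : X) : ICn Y N K (a • x) = |a| * ICn Y N K x := by
  rcases eq_or_ne a 0 with rfl | ha
  · simp only [abs_zero, zero_mul]
    refine le_antisymm ?_ (IC_nonneg hnn hK _)
    have := IC_smul_le hs hnn hK 0 x
    simpa using this
  · refine le_antisymm (IC_smul_le hs hnn hK a x) ?_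
    have h1 := IC_smul_le hs hnn hK a⁻¹ (a • x)
    have h2 : a⁻¹ • (a • x) = x := by
      rw [smul_smul, inv_mul_cancel₀ ha, one_smul]
    rw [h2] at h1
    have hapos : 0 < |a| := abs_pos.mpr ha
    have h3 : |a⁻¹| = |a|⁻¹ := abs_inv a
    rw [h3] at h1
    calc |a| * ICn Y N K x ≤ |a| * (|a|⁻¹ * ICn Y N K (a • x)) :=
          mul_le_mul_of_nonneg_left h1 hapos.le
      _ = ICn Y N K (a • x) := by field_simp

lemma IC_lower {c : ℝ} (hc : 0 < c) (hK : 0 < K) (hlb : ∀ z : Y, c * ‖(z : X)‖ ≤ N z)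
    (hnn : ∀ z : Y, 0 ≤ N z) (x : X) : min c K * ‖x‖ ≤ ICn Y N K x := by
  haveI : Nonempty Y := ⟨0⟩
  refine le_ciInf fun z => ?_
  have h1 : ‖x‖ ≤ ‖(z : X)‖ + ‖x - (z : X)‖ := by
    have := norm_add_le ((z : X)) (x - (z : X))
    simpa using this
  have h2 := hlb z
  have h3 : min c K ≤ c := min_le_left _ _
  have h4 : min c K ≤ K := min_le_right _ _
  have h5 : 0 < min c K := lt_min hc hK
  nlinarith [norm_nonneg (x - (z : X)), norm_nonneg ((z : X)), norm_nonneg x]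

lemma IC_coe (hnn : ∀ z : Y, 0 ≤ N z) (hK : 0 ≤ K)
    (hKY : ∀ y z : Y, N y ≤ N z + K * ‖(y : X) - (z : X)‖) (y : Y) :
    ICn Y N K ((y : Y) : X) = N y := by
  haveI : Nonempty Y := ⟨0⟩
  refine le_antisymm ?_ (le_ciInf fun z => hKY y z)
  have := IC_le hnn hK (y : X) y
  simpa using this

lemma IC_lip (hnn : ∀ z : Y, 0 ≤ N z) (hK : 0 ≤ K) (x x' : X) :
    ICn Y N K x ≤ ICn Y N K x' + K * ‖x - x'‖ := by
  haveI : Nonempty Y := ⟨0⟩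
  have h : ∀ z : Y, ICn Y N K x - K * ‖x - x'‖ ≤ N z + K * ‖x' - (z : X)‖ := by
    intro z
    have h1 := IC_le hnn hK x z
    have h2 : ‖x - (z : X)‖ ≤ ‖x - x'‖ + ‖x' - (z : X)‖ := norm_sub_le_norm_sub_add_norm_sub _ _ _
    nlinarith
  have h9 : ICn Y N K x - K * ‖x - x'‖ ≤ ICn Y N K x' := le_ciInf h
  linarith

lemma IC_approx (hnn : ∀ z : Y, 0 ≤ N z) (hK : 0 ≤ K) (x : X) {d : ℝ} (hd : 0 < d) :
    ∃ z : Y, N z + K * ‖x - (z : X)‖ < ICn Y N K x + d := by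
  haveI : Nonempty Y := ⟨0⟩
  refine exists_lt_of_ciInf_lt ?_
  show ICn Y N K x < ICn Y N K x + d
  linarith

end IC

lemma l2_cs {a b a' b' : ℝ} : a * a' + b * b' ≤ Real.sqrt (a^2 + b^2) * Real.sqrt (a'^2 + b'^2) := by
  rcases le_or_gt (a * a' + b * b') 0 with h | h
  · exact h.trans (by positivity)
  · rw [← Real.sqrt_mul (by positivity)]
    refine (Real.le_sqrt h.le (by positivity)).mpr ?_
    nlinarith [sq_nonneg (a * b' - a' * b)]

lemma l2_add {a b a' b' : ℝ} :
    Real.sqrt ((a + a')^2 + (b + b')^2) ≤ Real.sqrt (a^2 + b^2) + Real.sqrt (a'^2 + b'^2) := by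
  have hs : (Real.sqrt (a^2 + b^2))^2 = a^2 + b^2 := Real.sq_sqrt (by positivity)
  have hs' : (Real.sqrt (a'^2 + b'^2))^2 = a'^2 + b'^2 := Real.sq_sqrt (by positivity)
  have key := l2_cs (a := a) (b := b) (a' := a') (b' := b')
  calc Real.sqrt ((a + a')^2 + (b + b')^2)
      ≤ Real.sqrt ((Real.sqrt (a^2 + b^2) + Real.sqrt (a'^2 + b'^2))^2) := by
        apply Real.sqrt_le_sqrt; nlinarith
    _ = Real.sqrt (a^2 + b^2) + Real.sqrt (a'^2 + b'^2) := Real.sqrt_sq (by positivity)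

lemma l2_mono {a b a2 b2 : ℝ} (ha : 0 ≤ a) (hb : 0 ≤ b) (ha2 : a ≤ a2) (hb2 : b ≤ b2) :
    Real.sqrt (a^2 + b^2) ≤ Real.sqrt (a2^2 + b2^2) := by
  apply Real.sqrt_le_sqrt; nlinarith
noncomputable def ExtNorm {X : Type*} [NormedAddCommGroup X] [NormedSpace ℝ X]
    (Y : Subspace ℝ X) (N : Y → ℝ) (C : ℝ) (x : X) : ℝ :=
  Real.sqrt ((ICn Y N C x)^2 + (ICn Y (fun _ => (0:ℝ)) 1 x)^2)

set_option maxHeartbeats 2000000 in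
/-- Any equivalent norm `N` on a closed subspace `Y` of a Banach space `X` extends to an
equivalent norm `N'` on `X` such that every NSE point of the unit sphere of `(Y, N)` is an
NSE point of the unit sphere of `(X, N')`. -/
theorem NSE_extension_to_superspace {X : Type*} [NormedAddCommGroup X] [NormedSpace ℝ X]
    [CompleteSpace X] (Y : Subspace ℝ X) (hY : IsClosed (Y : Set X))
    (N : Y → ℝ) (hN : IsEquivNorm N) :
    ∃ N' : X → ℝ, IsEquivNorm N' ∧ (∀ y : Y, N' (y : X) = N y) ∧
      ∀ y : Y, N y = 1 → NSEPoint N y → NSEPoint N' (y : X) := by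
  classical
  obtain ⟨c, hc, hlow⟩ := hN.lower
  obtain ⟨C, hC, hupp⟩ := hN.upper
  have hadd := hN.add_le
  have hs := hN.smul_eq
  have hnn : ∀ z : Y, 0 ≤ N z := fun z => le_trans (by positivity) (hlow z)
  have hlowX : ∀ z : Y, c * ‖(z : X)‖ ≤ N z := fun z => hlow z
  have huppX : ∀ z : Y, N z ≤ C * ‖(z : X)‖ := fun z => hupp z
  have hKY : ∀ y z : Y, N y ≤ N z + C * ‖(y : X) - (z : X)‖ := by
    intro y z
    have h1 : N y ≤ N z + N (y - z) := by
      have := hadd z (y - z); simpa using this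
    have h2 : N (y - z) ≤ C * ‖(y : X) - (z : X)‖ := by
      have := huppX (y - z)
      simpa using this
    linarith
  -- facts about the zero norm
  have hnn0 : ∀ z : Y, 0 ≤ (fun _ : Y => (0:ℝ)) z := fun _ => le_refl 0
  have hs0 : ∀ (a : ℝ) (z : Y), (fun _ : Y => (0:ℝ)) (a • z) = |a| * (fun _ : Y => (0:ℝ)) z := by
    intro a z; simp
  have hadd0 : ∀ z w : Y, (fun _ : Y => (0:ℝ)) (z + w) ≤
      (fun _ : Y => (0:ℝ)) z + (fun _ : Y => (0:ℝ)) w := by intro z w; simp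
  have hKY0 : ∀ y z : Y, (fun _ : Y => (0:ℝ)) y ≤
      (fun _ : Y => (0:ℝ)) z + 1 * ‖(y : X) - (z : X)‖ := by
    intro y z; simpa using norm_nonneg ((y : X) - (z : X))
  -- basic facts
  have hN1nn : ∀ x : X, 0 ≤ ICn Y N C x := IC_nonneg hnn hC.le
  have hDnn : ∀ x : X, 0 ≤ ICn Y (fun _ => (0:ℝ)) 1 x := IC_nonneg hnn0 zero_le_one
  have hDle : ∀ x : X, ICn Y (fun _ => (0:ℝ)) 1 x ≤ ‖x‖ := by
    intro x; have := IC_le_norm hs0 hnn0 zero_le_one x; simpa using this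
  have hN1coe : ∀ y : Y, ICn Y N C ((y : Y) : X) = N y := IC_coe hnn hC.le hKY
  have hDcoe : ∀ y : Y, ICn Y (fun _ => (0:ℝ)) 1 ((y : Y) : X) = 0 := IC_coe hnn0 zero_le_one hKY0
  have hDinv : ∀ (w : X) (y : Y), ICn Y (fun _ => (0:ℝ)) 1 (w + (y : X)) =
      ICn Y (fun _ => (0:ℝ)) 1 w := by
    intro w y
    refine le_antisymm ?_ ?_
    · have h1 := IC_add hadd0 hnn0 zero_le_one w (y : X)
      rw [hDcoe y] at h1
      linarith
    · have h1 := IC_add hadd0 hnn0 zero_le_one (w + (y : X)) ((-y : Y) : X)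
      have e : w + (y : X) + ((-y : Y) : X) = w := by
        push_cast; abel
      rw [e, hDcoe (-y)] at h1
      linarith
  have hN'coe : ∀ y : Y, ExtNorm Y N C ((y : Y) : X) = N y := by
    intro y
    show Real.sqrt _ = N y
    rw [hN1coe y, hDcoe y]
    have : N y ^ 2 + (0:ℝ)^2 = N y ^ 2 := by ring
    rw [this, Real.sqrt_sq (hnn y)]
  have hN1leN' : ∀ x : X, ICn Y N C x ≤ ExtNorm Y N C x := by
    intro x
    refine (Real.le_sqrt (hN1nn x) (by positivity)).mpr ?_
    nlinarith [sq_nonneg (ICn Y (fun _ => (0:ℝ)) 1 x)]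
  have hN'up : ∀ x : X, ExtNorm Y N C x ≤ Real.sqrt (C^2 + 1) * ‖x‖ := by
    intro x
    have h1 : ICn Y N C x ≤ C * ‖x‖ := IC_le_norm hs hnn hC.le x
    have h2 := hDle x
    calc ExtNorm Y N C x ≤ Real.sqrt ((C * ‖x‖)^2 + ‖x‖^2) :=
          l2_mono (hN1nn x) (hDnn x) h1 h2
      _ = Real.sqrt ((C^2 + 1) * ‖x‖^2) := by ring_nf
      _ = Real.sqrt (C^2 + 1) * ‖x‖ := by
          rw [Real.sqrt_mul (by positivity), Real.sqrt_sq (norm_nonneg x)]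
  have hEquiv : IsEquivNorm (ExtNorm Y N C) := by
    refine ⟨?_, ?_, ?_, ?_⟩
    · intro x y
      have h1 := IC_add hadd hnn hC.le x y
      have h2 := IC_add hadd0 hnn0 zero_le_one x y
      calc ExtNorm Y N C (x + y)
          ≤ Real.sqrt ((ICn Y N C x + ICn Y N C y)^2 +
              (ICn Y (fun _ => (0:ℝ)) 1 x + ICn Y (fun _ => (0:ℝ)) 1 y)^2) :=
            l2_mono (hN1nn _) (hDnn _) h1 h2
        _ ≤ ExtNorm Y N C x + ExtNorm Y N C y := l2_add
    · intro a x
      show Real.sqrt _ = |a| * Real.sqrt _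
      rw [IC_smul hs hnn hC.le, IC_smul hs0 hnn0 zero_le_one]
      rw [show (|a| * ICn Y N C x)^2 + (|a| * ICn Y (fun _ => (0:ℝ)) 1 x)^2
            = a^2 * ((ICn Y N C x)^2 + (ICn Y (fun _ => (0:ℝ)) 1 x)^2) by
          rw [mul_pow, mul_pow, sq_abs]; ring]
      rw [Real.sqrt_mul (sq_nonneg a), Real.sqrt_sq_eq_abs]
    · exact ⟨min c C, lt_min hc hC, fun x =>
        le_trans (IC_lower hc hC hlowX hnn x) (hN1leN' x)⟩
    · exact ⟨Real.sqrt (C^2 + 1), Real.sqrt_pos.mpr (by positivity), hN'up⟩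
  refine ⟨ExtNorm Y N C, hEquiv, hN'coe, ?_⟩
  intro y₀ hy1 hNSE f hDS hfy
  have hf1 : ∀ x : X, |f x| ≤ ExtNorm Y N C x := hDS.1
  -- key step : f is dominated by the inf-convolution norm
  have hfle : ∀ x : X, f x ≤ ICn Y N C x := by
    intro x
    have hb0 : 0 ≤ ICn Y (fun _ => (0:ℝ)) 1 (x - (y₀ : X)) := hDnn _
    have ha0 : 0 ≤ ICn Y N C x := hN1nn x
    set M : ℝ := ((ICn Y N C x - 1)^2 + (ICn Y (fun _ => (0:ℝ)) 1 (x - (y₀ : X)))^2)/2 with hM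
    have hM0 : 0 ≤ M := by positivity
    have hstep : ∀ t : ℝ, 0 < t → t ≤ 1 → 0 ≤ 1 + t * (f x - 1) → f x ≤ ICn Y N C x + t * M := by
      intro t ht ht1 hpos
      have e1 : f ((y₀ : X) + t • (x - (y₀ : X))) = 1 + t * (f x - 1) := by
        rw [map_add, map_smul, map_sub, hfy, smul_eq_mul]
        try ring
      have e2 : ICn Y N C ((y₀ : X) + t • (x - (y₀ : X))) ≤ 1 + t * (ICn Y N C x - 1) := by
        have erw : (y₀ : X) + t • (x - (y₀ : X)) = (1 - t) • (y₀ : X) + t • x := by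
          rw [smul_sub, sub_smul, one_smul]; abel
        rw [erw]
        have h1 := IC_add hadd hnn hC.le ((1 - t) • (y₀ : X)) (t • x)
        have h2 := IC_smul hs hnn hC.le (1 - t) (y₀ : X)
        have h3 := IC_smul hs hnn hC.le t x
        rw [abs_of_nonneg (by linarith)] at h2
        rw [abs_of_nonneg ht.le] at h3
        rw [hN1coe y₀, hy1] at h2
        rw [h2, h3] at h1
        nlinarith
      have e3 : ICn Y (fun _ => (0:ℝ)) 1 ((y₀ : X) + t • (x - (y₀ : X)))
          = t * ICn Y (fun _ => (0:ℝ)) 1 (x - (y₀ : X)) := by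
        rw [add_comm, hDinv (t • (x - (y₀ : X))) y₀, IC_smul hs0 hnn0 zero_le_one,
          abs_of_nonneg ht.le]
      have e4 : 1 + t * (f x - 1) ≤
          Real.sqrt ((1 + t * (ICn Y N C x - 1))^2 +
            (t * ICn Y (fun _ => (0:ℝ)) 1 (x - (y₀ : X)))^2) := by
        have step1 : 1 + t * (f x - 1) ≤ ExtNorm Y N C ((y₀ : X) + t • (x - (y₀ : X))) := by
          rw [← e1]
          exact (le_abs_self _).trans (hf1 _)
        refine step1.trans ?_
        show Real.sqrt _ ≤ _
        rw [e3]
        refine l2_mono (hN1nn _) (by positivity) e2 le_rfl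
      have e5 : (1 + t * (f x - 1))^2 ≤ (1 + t * (ICn Y N C x - 1))^2 +
          (t * ICn Y (fun _ => (0:ℝ)) 1 (x - (y₀ : X)))^2 :=
        (Real.le_sqrt hpos (by positivity)).mp e4
      nlinarith [sq_nonneg (t * (f x - 1)), mul_pos ht ht]
    refine le_of_forall_pos_le_add fun ε hε => ?_
    set t : ℝ := min 1 (min (1/(1 + |f x - 1|)) (ε/(M+1))) with htd
    have ht0 : 0 < t := lt_min one_pos (lt_min (by positivity) (by positivity))
    have ht1 : t ≤ 1 := min_le_left _ _
    have htu : t * |f x - 1| ≤ (1/(1 + |f x - 1|)) * |f x - 1| :=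
      mul_le_mul_of_nonneg_right ((min_le_right _ _).trans (min_le_left _ _)) (abs_nonneg _)
    have hpos : 0 ≤ 1 + t * (f x - 1) := by
      have h1 : -(t * |f x - 1|) ≤ t * (f x - 1) := by
        have h := neg_abs_le (f x - 1)
        nlinarith [ht0.le]
      have h2 : (1/(1 + |f x - 1|)) * |f x - 1| < 1 := by
        rw [div_mul_eq_mul_div, one_mul, div_lt_one (by positivity)]
        linarith [abs_nonneg (f x - 1)]
      linarith
    have hkey := hstep t ht0 ht1 hpos
    have htε : t * M ≤ ε := by
      have h1 : t ≤ ε/(M+1) := (min_le_right _ _).trans (min_le_right _ _)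
      have h2 : t * M ≤ (ε/(M+1)) * M := mul_le_mul_of_nonneg_right h1 hM0
      have h3 : (ε/(M+1)) * M ≤ ε := by
        rw [div_mul_eq_mul_div, div_le_iff₀ (by positivity)]
        nlinarith
      linarith
    linarith
  -- now the strongly exposed property
  intro xs hxs hfx
  have hS1 : ∀ n, (ICn Y N C (xs n))^2 + (ICn Y (fun _ => (0:ℝ)) 1 (xs n))^2 ≤ 1 := by
    intro n
    have h1 := hxs n
    have h2 : ((ICn Y N C (xs n))^2 + (ICn Y (fun _ => (0:ℝ)) 1 (xs n))^2)
        = (ExtNorm Y N C (xs n))^2 := (Real.sq_sqrt (by positivity)).symm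
    rw [h2]
    have h0 : 0 ≤ ExtNorm Y N C (xs n) := Real.sqrt_nonneg _
    nlinarith [h0, h1]
  have hN1le : ∀ n, ICn Y N C (xs n) ≤ 1 := by
    intro n
    nlinarith [hS1 n, hN1nn (xs n), sq_nonneg (ICn Y (fun _ => (0:ℝ)) 1 (xs n))]
  have hev : ∀ᶠ n in atTop, 0 < f (xs n) := hfx.eventually (eventually_gt_nhds zero_lt_one)
  have hD2 : Tendsto (fun n => (ICn Y (fun _ => (0:ℝ)) 1 (xs n))^2) atTop (𝓝 0) := by
    apply squeeze_zero' (Eventually.of_forall fun n => sq_nonneg _)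
      (g := fun n => 1 - f (xs n) * f (xs n))
    · refine hev.mono fun n hn => ?_
      have h2 := hfle (xs n)
      have h3 := hS1 n
      nlinarith [hN1nn (xs n)]
    · have h : Tendsto (fun n => 1 - f (xs n) * f (xs n)) atTop (𝓝 (1 - 1 * 1)) :=
        tendsto_const_nhds.sub (hfx.mul hfx)
      simpa using h
  have hD0 : Tendsto (fun n => ICn Y (fun _ => (0:ℝ)) 1 (xs n)) atTop (𝓝 0) := by
    have h := (Real.continuous_sqrt.tendsto 0).comp hD2
    simp only [Function.comp_def, Real.sqrt_zero] at h
    exact h.congr fun n => Real.sqrt_sq (hDnn (xs n))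
  have hone : Tendsto (fun n : ℕ => (1:ℝ)/(n+1)) atTop (𝓝 0) :=
    tendsto_one_div_add_atTop_nhds_zero_nat
  have happrox : ∀ n : ℕ, ∃ z : Y, (fun _ : Y => (0:ℝ)) z + 1 * ‖xs n - (z : X)‖ <
      ICn Y (fun _ => (0:ℝ)) 1 (xs n) + 1/(n+1) := by
    intro n
    exact IC_approx hnn0 zero_le_one (xs n) (by positivity)
  choose zn hzn using happrox
  have hβlt : ∀ n, ‖xs n - (zn n : X)‖ < ICn Y (fun _ => (0:ℝ)) 1 (xs n) + 1/(n+1) := by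
    intro n
    have := hzn n
    simpa using this
  have hβ0 : Tendsto (fun n => ‖xs n - (zn n : X)‖) atTop (𝓝 0) := by
    refine squeeze_zero' (Eventually.of_forall fun n => norm_nonneg _)
      (Eventually.of_forall fun n => (hβlt n).le) ?_
    simpa using hD0.add hone
  have htail : Tendsto (fun n => xs n - (zn n : X)) atTop (𝓝 0) :=
    squeeze_zero_norm (fun n => le_refl _) hβ0
  have hNzn : ∀ n, N (zn n) ≤ 1 + C * ‖xs n - (zn n : X)‖ := by
    intro n
    have h1 : ICn Y N C ((zn n : X)) ≤ ICn Y N C (xs n) + C * ‖(zn n : X) - xs n‖ :=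
      IC_lip hnn hC.le _ _
    rw [hN1coe (zn n), norm_sub_rev] at h1
    linarith [hN1le n]
  have hfsub : Tendsto (fun n => f (xs n - (zn n : X))) atTop (𝓝 0) := by
    apply squeeze_zero_norm (a := fun n => Real.sqrt (C^2+1) * ‖xs n - (zn n : X)‖)
    · intro n
      have h1 := hf1 (xs n - (zn n : X))
      have h2 := hN'up (xs n - (zn n : X))
      calc ‖f (xs n - (zn n : X))‖ = |f (xs n - (zn n : X))| := rfl
        _ ≤ _ := h1.trans h2
    · simpa using hβ0.const_mul (Real.sqrt (C^2+1))
  have hfzn : Tendsto (fun n => f ((zn n : X))) atTop (𝓝 1) := by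
    have h := hfx.sub hfsub
    simp only [sub_zero] at h
    refine h.congr fun n => ?_
    rw [map_sub]; ring
  have hr1 : ∀ n, 1 ≤ max 1 (N (zn n)) := fun n => le_max_left _ _
  have hrpos : ∀ n, 0 < max 1 (N (zn n)) := fun n => lt_of_lt_of_le one_pos (hr1 n)
  have hrub : ∀ n, max 1 (N (zn n)) ≤ 1 + C * ‖xs n - (zn n : X)‖ := fun n =>
    max_le (by nlinarith [norm_nonneg (xs n - (zn n : X))]) (hNzn n)
  have hrt : Tendsto (fun n => max 1 (N (zn n))) atTop (𝓝 1) := by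
    refine tendsto_of_tendsto_of_tendsto_of_le_of_le tendsto_const_nhds ?_ hr1 hrub
    have h : Tendsto (fun n => 1 + C * ‖xs n - (zn n : X)‖) atTop (𝓝 (1 + C * 0)) :=
      tendsto_const_nhds.add (hβ0.const_mul C)
    simpa using h
  have hrinv : Tendsto (fun n => (max 1 (N (zn n)))⁻¹) atTop (𝓝 1) := by
    have h := hrt.inv₀ one_ne_zero
    simpa using h
  have hNw : ∀ n, N ((max 1 (N (zn n)))⁻¹ • zn n) ≤ 1 := by
    intro n
    rw [hs, abs_of_nonneg (inv_nonneg.mpr (hrpos n).le)]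
    calc (max 1 (N (zn n)))⁻¹ * N (zn n) ≤ (max 1 (N (zn n)))⁻¹ * max 1 (N (zn n)) :=
        mul_le_mul_of_nonneg_left (le_max_right _ _) (inv_nonneg.mpr (hrpos n).le)
      _ = 1 := inv_mul_cancel₀ (hrpos n).ne'
  have hgDS : DualSphere N (f.comp Y.subtypeL) := by
    constructor
    · intro z
      calc |f.comp Y.subtypeL z| = |f (z : X)| := rfl
        _ ≤ ExtNorm Y N C (z : X) := hf1 _
        _ = N z := hN'coe z
    · intro d hd
      have h := hd y₀
      have he : f.comp Y.subtypeL y₀ = 1 := by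
        show f ((y₀ : Y) : X) = 1
        exact hfy
      rw [he, hy1, mul_one] at h
      simpa using h
  have hgy : f.comp Y.subtypeL y₀ = 1 := hfy
  have hgw : Tendsto (fun n => f.comp Y.subtypeL ((max 1 (N (zn n)))⁻¹ • zn n)) atTop (𝓝 1) := by
    have h := hrinv.mul hfzn
    rw [one_mul] at h
    refine h.congr fun n => ?_
    simp only [ContinuousLinearMap.comp_apply, Submodule.subtypeL_apply, Submodule.coe_smul,
      map_smul, smul_eq_mul]
  have hwY : Tendsto (fun n => (max 1 (N (zn n)))⁻¹ • zn n) atTop (𝓝 y₀) :=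
    hNSE (f.comp Y.subtypeL) hgDS hgy _ hNw hgw
  have hwX : Tendsto (fun n => (((max 1 (N (zn n)))⁻¹ • zn n : Y) : X)) atTop (𝓝 (y₀ : X)) :=
    (continuous_subtype_val.tendsto y₀).comp hwY
  have hmid : Tendsto (fun n => ((zn n : X) - (((max 1 (N (zn n)))⁻¹ • zn n : Y) : X)))
      atTop (𝓝 0) := by
    apply squeeze_zero_norm
      (a := fun n => |1 - (max 1 (N (zn n)))⁻¹| * ((1 + C * ‖xs n - (zn n : X)‖)/c))
    · intro n
      have e2 : (zn n : X) - (((max 1 (N (zn n)))⁻¹ • zn n : Y) : X)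
          = (1 - (max 1 (N (zn n)))⁻¹) • (zn n : X) := by
        rw [Submodule.coe_smul, sub_smul, one_smul]
      rw [e2, norm_smul, Real.norm_eq_abs]
      have h3 : ‖(zn n : X)‖ ≤ (1 + C * ‖xs n - (zn n : X)‖)/c := by
        rw [le_div_iff₀ hc]
        have h4 := hlowX (zn n)
        nlinarith [hNzn n]
      exact mul_le_mul_of_nonneg_left h3 (abs_nonneg _)
    · have h1 : Tendsto (fun n : ℕ => |1 - (max 1 (N (zn n)))⁻¹|) atTop (𝓝 0) := by
        have h : Tendsto (fun n : ℕ => (1:ℝ) - (max 1 (N (zn n)))⁻¹) atTop (𝓝 (1 - 1)) :=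
          tendsto_const_nhds.sub hrinv
        rw [sub_self] at h
        simpa using h.abs
      have h2 : Tendsto (fun n => (1 + C * ‖xs n - (zn n : X)‖)/c) atTop (𝓝 ((1 + C * 0)/c)) :=
        (tendsto_const_nhds.add (hβ0.const_mul C)).div_const c
      have h := h1.mul h2
      simpa using h
  have hfinal : Tendsto (fun n => (xs n - (zn n : X)) + ((zn n : X) -
      (((max 1 (N (zn n)))⁻¹ • zn n : Y) : X)) + (((max 1 (N (zn n)))⁻¹ • zn n : Y) : X))
      atTop (𝓝 (0 + 0 + (y₀ : X))) := (htail.add hmid).add hwX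
  simp only [zero_add] at hfinal
  exact hfinal.congr fun n => by abel
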